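/- arXiv:2206.10735 — 5 statements merged into one kernel-verified Lean document; each statement's English description precedes it below -/
import Mathlib

section
/- For integers n ≥ 0, q ≥ 2, and 0 ≤ j ≤ n, ∑_{k=0}^{n(q-1)} (C^{(q)}_{k,n})^2 ≥ ∑_{k=0}^{(n-j)(q-1)} C^{(q)}_{k,n+j} · C^{(q)}_{k,n-j}. -/
/-!
The polynomial `P = 1 + x + ⋯ + x^(q-1)` is palindromic of degree `q - 1`, hence `P^m` is
palindromic of degree `m (q - 1)`. With `s = (n - j)(q - 1)` and `d = j (q - 1)`, palindromicity of
`P^(n-j)` identifies the left-hand side with the coefficient of `x^s` in `P^(n+j) P^(n-j) = P^n P^n`,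
and palindromicity of `P^n` rewrites that coefficient as `∑_{k ≤ s} a_k a_(d+k)`, where `a_k` are the
coefficients of `P^n`. By Cauchy–Schwarz this is at most `∑_k a_k²`.
-/

/-- `qPascal q k m` is the coefficient of `x^k` in `(1 + x + ⋯ + x^(q-1))^m`. -/
noncomputable def qPascal (q k m : ℕ) : ℕ :=
  ((∑ i ∈ Finset.range q, (Polynomial.X : Polynomial ℕ) ^ i) ^ m).coeff k

open Finset Polynomial

theorem Finset.sum_range_mul_shift_le_sum_sq {R : Type*} [CommSemiring R] [LinearOrder R]
    [IsStrictOrderedRing R] [ExistsAddOfLE R] (a : ℕ → R) (n d : ℕ) :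
    ∑ k ∈ range n, a k * a (d + k) ≤ ∑ k ∈ range (d + n), a k ^ 2 := by
  set T := ∑ k ∈ range (d + n), a k ^ 2
  have h_head : ∑ k ∈ range n, a k ^ 2 ≤ T :=
    sum_le_sum_of_subset_of_nonneg (range_subset_range.mpr (Nat.le_add_left n d))
      fun k _ _ ↦ sq_nonneg (a k)
  have h_tail : ∑ k ∈ range n, a (d + k) ^ 2 ≤ T :=
    calc ∑ k ∈ range n, a (d + k) ^ 2
        ≤ ∑ k ∈ range d, a k ^ 2 + ∑ k ∈ range n, a (d + k) ^ 2 :=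
          le_add_of_nonneg_left (sum_nonneg fun k _ ↦ sq_nonneg (a k))
      _ = T := (sum_range_add _ d n).symm
  refine le_of_pow_le_pow_left₀ two_ne_zero (sum_nonneg fun k _ ↦ sq_nonneg (a k)) ?_
  calc (∑ k ∈ range n, a k * a (d + k)) ^ 2
      ≤ (∑ k ∈ range n, a k ^ 2) * ∑ k ∈ range n, a (d + k) ^ 2 := sum_mul_sq_le_sq_mul_sq _ _ _
    _ ≤ T * T := mul_le_mul h_head h_tail (sum_nonneg fun k _ ↦ sq_nonneg _)
        (sum_nonneg fun k _ ↦ sq_nonneg _)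
    _ = T ^ 2 := (sq T).symm

namespace Polynomial

variable {R : Type*} [Semiring R]

theorem coeff_mul_eq_sum_of_reflect_eq (f g : R[X]) (s d : ℕ) (hg : reflect (s + d) g = g) :
    (f * g).coeff s = ∑ k ∈ range (s + 1), f.coeff k * g.coeff (d + k) := by
  rw [coeff_mul, Nat.sum_antidiagonal_eq_sum_range_succ_mk]
  refine sum_congr rfl fun k hk ↦ ?_
  have hks : k ≤ s := Nat.lt_succ_iff.mp (mem_range.mp hk)
  calc f.coeff k * g.coeff (s - k)
      = f.coeff k * g.coeff (revAt (s + d) (d + k)) := by rw [revAt_le (by omega)]; congr 2; omega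
    _ = f.coeff k * g.coeff (d + k) := by rw [← coeff_reflect, hg]

theorem reflect_pow (p : R[X]) {N : ℕ} (hp : p.natDegree ≤ N) (m : ℕ) :
    reflect (m * N) (p ^ m) = reflect N p ^ m := by
  induction m with
  | zero => simp
  | succ m ih =>
    rw [pow_succ, pow_succ, add_one_mul,
      reflect_mul _ _ ((natDegree_pow_le).trans (Nat.mul_le_mul_left m hp)) hp, ih]

theorem coeff_geom_sum (q k : ℕ) :
    (∑ i ∈ range q, (X : R[X]) ^ i).coeff k = if k < q then 1 else 0 := by
  simp [coeff_X_pow]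

theorem natDegree_geom_sum_le (q : ℕ) : (∑ i ∈ range q, (X : R[X]) ^ i).natDegree ≤ q - 1 :=
  natDegree_sum_le_of_forall_le _ _ fun i hi ↦
    (natDegree_X_pow_le i).trans (Nat.le_sub_one_of_lt (mem_range.mp hi))

theorem reflect_geom_sum (q : ℕ) :
    reflect (q - 1) (∑ i ∈ range q, (X : R[X]) ^ i) = ∑ i ∈ range q, (X : R[X]) ^ i := by
  ext k
  rw [coeff_reflect, coeff_geom_sum, coeff_geom_sum]
  rcases le_or_gt k (q - 1) with hk | hk
  · rw [revAt_le hk]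
    simp only [show q - 1 - k < q ↔ k < q by omega]
  · rw [revAt_eq_self_of_lt hk]

theorem reflect_pow_geom_sum (q m : ℕ) :
    reflect (m * (q - 1)) ((∑ i ∈ range q, (X : R[X]) ^ i) ^ m) =
      (∑ i ∈ range q, (X : R[X]) ^ i) ^ m := by
  rw [reflect_pow _ (natDegree_geom_sum_le q), reflect_geom_sum]

end Polynomial

theorem qPascal_sum_sq_ge_general (q n j : ℕ) (hj : j ≤ n) :
    ∑ k ∈ Finset.range ((n - j) * (q - 1) + 1),
        qPascal q k (n + j) * qPascal q k (n - j) ≤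
      ∑ k ∈ Finset.range (n * (q - 1) + 1), (qPascal q k n) ^ 2 := by
  set P : ℕ[X] := ∑ i ∈ range q, X ^ i
  set s := (n - j) * (q - 1)
  set d := j * (q - 1)
  have hsd : s + d = n * (q - 1) := by rw [← add_mul, Nat.sub_add_cancel hj]
  calc ∑ k ∈ range (s + 1), qPascal q k (n + j) * qPascal q k (n - j)
      = (P ^ (n + j) * P ^ (n - j)).coeff s := by
        rw [coeff_mul_eq_sum_of_reflect_eq _ _ s 0 (reflect_pow_geom_sum q _)]
        simp only [zero_add]
        rfl
    _ = (P ^ n * P ^ n).coeff s := by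
        rw [← pow_add, ← pow_add, show n + j + (n - j) = n + n by omega]
    _ = ∑ k ∈ range (s + 1), qPascal q k n * qPascal q (d + k) n :=
        coeff_mul_eq_sum_of_reflect_eq _ _ s d (hsd ▸ reflect_pow_geom_sum q n)
    _ ≤ ∑ k ∈ range (d + (s + 1)), qPascal q k n ^ 2 := sum_range_mul_shift_le_sum_sq _ _ _
    _ = ∑ k ∈ range (n * (q - 1) + 1), qPascal q k n ^ 2 := by congr 2; omega

theorem qPascal_sum_sq_ge (q n j : ℕ) (hq : 2 ≤ q) (hj : j ≤ n) :
    ∑ k ∈ Finset.range ((n - j) * (q - 1) + 1),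
        qPascal q k (n + j) * qPascal q k (n - j) ≤
      ∑ k ∈ Finset.range (n * (q - 1) + 1), (qPascal q k n) ^ 2 :=
  qPascal_sum_sq_ge_general q n j hj
end

section
/- For n ≥ 1 and q ≥ 2 such that n(q-1) is even, the central coefficient of the n-th row of the q-ary Pascal's triangle satisfies C^{(q)}_{n(q-1)/2,n} ≤ q^{n-1}. -/
open Polynomial Finset

theorem sum_coeff_le_eval_one (g : ℕ[X]) (s : Finset ℕ) :
    ∑ j ∈ s, g.coeff j ≤ g.eval 1 := by
  calc ∑ j ∈ s, g.coeff j ≤ ∑ j ∈ s ∪ g.support, g.coeff j :=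
        sum_le_sum_of_subset subset_union_left
    _ = ∑ j ∈ g.support, g.coeff j :=
        (sum_subset subset_union_right fun j _ hj => notMem_support_iff.mp hj).symm
    _ = g.eval 1 := by simp [eval_eq_sum, Polynomial.sum_def]

theorem coeff_mul_le_eval_one {f : ℕ[X]} (hf : ∀ i, f.coeff i ≤ 1) (g : ℕ[X]) (k : ℕ) :
    (f * g).coeff k ≤ g.eval 1 := by
  calc (f * g).coeff k = ∑ p ∈ antidiagonal k, f.coeff p.1 * g.coeff p.2 := coeff_mul f g k
    _ ≤ ∑ p ∈ antidiagonal k, g.coeff p.2 :=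
        sum_le_sum fun p _ => (Nat.mul_le_mul_right _ (hf p.1)).trans_eq (one_mul _)
    _ = ∑ j ∈ range (k + 1), g.coeff j := by
        rw [Nat.sum_antidiagonal_eq_sum_range_succ fun _ j => g.coeff j]
        exact sum_range_reflect (fun j => g.coeff j) (k + 1)
    _ ≤ g.eval 1 := sum_coeff_le_eval_one g _

theorem coeff_geom_sum_X_pow_le_one (q i : ℕ) :
    (∑ j ∈ range q, (X : ℕ[X]) ^ j).coeff i ≤ 1 := by
  rw [finsetSum_coeff]
  simp only [coeff_X_pow, sum_ite_eq]
  split_ifs <;> simp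

theorem qPascal_le_pow_pred (q k n : ℕ) : qPascal q k n ≤ q ^ (n - 1) := by
  cases n with
  | zero => simp only [qPascal, pow_zero, coeff_one]; split_ifs <;> simp
  | succ m =>
    rw [qPascal, pow_succ', Nat.add_sub_cancel]
    refine (coeff_mul_le_eval_one (coeff_geom_sum_X_pow_le_one q) _ k).trans_eq ?_
    simp [eval_pow, eval_finsetSum]

theorem qPascal_central_le_general (q n : ℕ) :
    qPascal q (n * (q - 1) / 2) n ≤ q ^ (n - 1) :=
  qPascal_le_pow_pred q _ n

theorem qPascal_central_le (q n : ℕ) (hq : 2 ≤ q) (hn : 1 ≤ n)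
    (he : Even (n * (q - 1))) :
    qPascal q (n * (q - 1) / 2) n ≤ q ^ (n - 1) :=
  qPascal_central_le_general q n
end

section
/- Let z ∈ {-1,0,1}^n have w ≥ 1 nonzero entries, and let r be a uniformly random vector in {0,...,q-1}^n. Then Pr[⟨r,z⟩ = 0] ≤ 1/q. -/
/-!
Pick a coordinate `j` with `z j ≠ 0`. Two solutions of `⟨r, z⟩ = 0` that agree off `j` agree
at `j` as well, so overwriting coordinate `j` by each of the `q` possible values embeds
`Fin q × {solutions}` into `Fin n → Fin q`; hence there are at most `q ^ n / q` solutions.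
-/

open Finset

theorem Finset.card_mul_card_le_card_fun_of_eq_off {ι α : Type*} [DecidableEq ι] [Fintype ι]
    [DecidableEq α] [Fintype α] (S : Finset (ι → α)) (j : ι)
    (hS : ∀ r ∈ S, ∀ s ∈ S, (∀ i ≠ j, r i = s i) → r j = s j) :
    Fintype.card α * #S ≤ Fintype.card (ι → α) := by
  have hinj : Set.InjOn (fun p : α × (ι → α) => Function.update p.2 j p.1)
      ↑(univ ×ˢ S : Finset (α × (ι → α))) := by
    rintro ⟨a, r⟩ hr ⟨b, s⟩ hs hrs
    simp only [coe_product, coe_univ, Set.mem_prod, Set.mem_univ, mem_coe, true_and] at hr hs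
    have hoff : ∀ i ≠ j, r i = s i := fun i hi => by
      simpa [Function.update_of_ne hi] using congrFun hrs i
    have hab : a = b := by simpa using congrFun hrs j
    have hrs' : r = s := funext fun i =>
      if hi : i = j then hi ▸ hS r hr s hs hoff else hoff i hi
    rw [hab, hrs']
  simpa [card_product] using card_le_card_of_injOn _ (fun _ _ => mem_univ _) hinj

theorem eq_of_sum_mul_eq_of_eq_off {ι R : Type*} [Fintype ι] [CommRing R] [IsDomain R]
    {z r s : ι → R} {j : ι} (hj : z j ≠ 0) (hoff : ∀ i ≠ j, r i = s i)
    (h : ∑ i, r i * z i = ∑ i, s i * z i) : r j = s j := by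
  classical
  rw [← add_sum_erase _ _ (mem_univ j), ← add_sum_erase _ _ (mem_univ j),
    sum_congr rfl fun i hi => by rw [hoff i (ne_of_mem_erase hi)]] at h
  exact mul_right_cancel₀ hj (add_right_cancel h)

theorem prob_inner_zero_le_general {n q : ℕ} (z : Fin n → ℤ)
    (hw : 1 ≤ (Finset.univ.filter (fun j => z j ≠ 0)).card) :
    ((Finset.univ.filter
        (fun r : Fin n → Fin q => ∑ i, (r i : ℤ) * z i = 0)).card : ℝ) /
      (q : ℝ) ^ n ≤ 1 / q := by
  obtain ⟨j, hj⟩ : ∃ j, z j ≠ 0 := by simpa [Finset.Nonempty] using Finset.card_pos.mp hw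
  set S := Finset.univ.filter (fun r : Fin n → Fin q => ∑ i, (r i : ℤ) * z i = 0)
  have hcard : q * #S ≤ q ^ n := by
    simpa using S.card_mul_card_le_card_fun_of_eq_off j fun r hr s hs hoff => by
      simp only [S, mem_filter, mem_univ, true_and] at hr hs
      have hoff' : ∀ i ≠ j, (r i : ℤ) = s i := fun i hi => by rw [hoff i hi]
      exact Fin.ext <| by exact_mod_cast eq_of_sum_mul_eq_of_eq_off hj hoff' (hr.trans hs.symm)
  rcases Nat.eq_zero_or_pos q with rfl | hq
  · simp [zero_pow (Fin.pos j).ne']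
  rw [div_le_div_iff₀ (by positivity) (by positivity), one_mul]
  exact_mod_cast (mul_comm _ _).trans_le hcard

theorem prob_inner_zero_le {n q : ℕ} (hq : 2 ≤ q) (z : Fin n → ℤ)
    (hz : ∀ j, z j = -1 ∨ z j = 0 ∨ z j = 1)
    (hw : 1 ≤ (Finset.univ.filter (fun j => z j ≠ 0)).card) :
    ((Finset.univ.filter
        (fun r : Fin n → Fin q => ∑ i, (r i : ℤ) * z i = 0)).card : ℝ) /
      (q : ℝ) ^ n ≤ 1 / q :=
  prob_inner_zero_le_general z hw
end

section
/- For any 0 ≤ t < k/2, the number of integer vectors obtainable as M·u + e with u ∈ {0,1}^n and wt(e) ≤ t, where each coordinate of M·u lies in a fixed interval of length L, is at most L^k · ∑_{i=0}^{t} binom(k,i)·(n+1)^i; consequently, if all 2^n binary vectors u are to be distinguishable one needs L^k ∑_{i=0}^{t} binom(k,i) (n+1)^i ≥ 2^n. -/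
/-!
Every received word `M u + e` lies in the sumset `B + S_t`, where `B = ∏ i, [a i, a i + L)` is a
box with `L ^ k` points and `S_t` is the set of error vectors with entries in `E` and at most `t`
nonzero entries. An error vector is determined by its support, a set of `i ≤ t` coordinates, and
its values on it, so `#S_t ≤ ∑ i ≤ t, (k choose i) (n + 1) ^ i`, and `#(B + S_t) ≤ #B * #S_t`.
If the `2 ^ n` binary vectors are distinguishable, already their error-free words `M u` are
`2 ^ n` distinct received words.
-/

/-- Hamming weight of an integer vector: the number of nonzero entries. -/
def wtZ {k : ℕ} (e : Fin k → ℤ) : ℕ :=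
  (Finset.univ.filter (fun i => e i ≠ 0)).card

open Finset Pointwise

section HammingBall

variable {ι α : Type*} [Fintype ι] [DecidableEq ι] [Zero α]

theorem card_piFinset_ite_zero (S : Finset ι) (E : Finset α) :
    (Fintype.piFinset fun i => if i ∈ S then E else {0}).card = E.card ^ S.card := by
  simp [Fintype.card_piFinset, apply_ite Finset.card]

variable [DecidableEq α]

variable (ι) in
def sparseVectors (E : Finset α) (t : ℕ) : Finset (ι → α) :=
  (Fintype.piFinset fun _ => E).filter (hammingNorm · ≤ t)

@[simp]
theorem mem_sparseVectors {E : Finset α} {t : ℕ} {e : ι → α} :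
    e ∈ sparseVectors ι E t ↔ (∀ i, e i ∈ E) ∧ hammingNorm e ≤ t := by
  simp [sparseVectors]

theorem card_sparseVectors_le (E : Finset α) (t : ℕ) :
    (sparseVectors ι E t).card ≤
      ∑ i ∈ range (t + 1), (Fintype.card ι).choose i * E.card ^ i := by
  have hcover : sparseVectors ι E t ⊆ (range (t + 1)).biUnion fun i =>
      (powersetCard i univ).biUnion fun S =>
        Fintype.piFinset fun j => if j ∈ S then E else {0} := by
    intro e he
    rw [mem_sparseVectors] at he
    simp only [mem_biUnion, mem_range, mem_powersetCard, Fintype.mem_piFinset]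
    refine ⟨hammingNorm e, by omega, univ.filter (e · ≠ 0), ⟨subset_univ _, rfl⟩, fun j => ?_⟩
    by_cases hj : e j = 0 <;> simp [hj, he.1 j]
  calc _ ≤ _ := card_le_card hcover
    _ ≤ ∑ i ∈ range (t + 1), ∑ S ∈ powersetCard i (univ : Finset ι), E.card ^ S.card := by
      refine card_biUnion_le.trans (sum_le_sum fun i _ => card_biUnion_le.trans ?_)
      simp only [card_piFinset_ite_zero, le_refl]
    _ = _ := by
      refine sum_congr rfl fun i _ => ?_
      rw [sum_congr rfl fun S hS => by rw [(mem_powersetCard.1 hS).2], sum_const,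
        card_powersetCard, card_univ, smul_eq_mul]

def perturbedImage [Add α] {β : Type*} (f : β → ι → α) (U : Set β) (E : Finset α) (t : ℕ) :
    Set (ι → α) :=
  {w | ∃ u e, u ∈ U ∧ hammingNorm e ≤ t ∧ (∀ i, e i ∈ E) ∧ w = f u + e}

variable [Add α] {β : Type*} {f : β → ι → α} {U : Set β} {B : Finset (ι → α)}

theorem perturbedImage_subset_add_sparseVectors (hB : ∀ u ∈ U, f u ∈ B) (E : Finset α) (t : ℕ) :
    perturbedImage f U E t ⊆ (↑(B + sparseVectors ι E t) : Set (ι → α)) := by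
  rintro w ⟨u, e, hu, he, hE, rfl⟩
  exact add_mem_add (hB u hu) (mem_sparseVectors.2 ⟨hE, he⟩)

theorem finite_perturbedImage (hB : ∀ u ∈ U, f u ∈ B) (E : Finset α) (t : ℕ) :
    (perturbedImage f U E t).Finite :=
  (finite_toSet _).subset (perturbedImage_subset_add_sparseVectors hB E t)

theorem ncard_perturbedImage_le (hB : ∀ u ∈ U, f u ∈ B) (E : Finset α) (t : ℕ) :
    (perturbedImage f U E t).ncard ≤
      B.card * ∑ i ∈ range (t + 1), (Fintype.card ι).choose i * E.card ^ i := by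
  calc _ ≤ (B + sparseVectors ι E t).card := by
        rw [← Set.ncard_coe_finset]
        exact Set.ncard_le_ncard (perturbedImage_subset_add_sparseVectors hB E t)
    _ ≤ B.card * (sparseVectors ι E t).card := card_add_le
    _ ≤ _ := Nat.mul_le_mul_left _ (card_sparseVectors_le E t)

end HammingBall

theorem ncard_binaryVectors (n : ℕ) : {u : Fin n → ℕ | ∀ j, u j ≤ 1}.ncard = 2 ^ n := by
  have : {u : Fin n → ℕ | ∀ j, u j ≤ 1} =
      ↑(Fintype.piFinset fun _ : Fin n => range 2) := by
    ext u
    simp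
  rw [this, Set.ncard_coe_finset, Fintype.card_piFinset]
  simp

theorem counting_converse_bound_general {n k t L : ℕ}
    (M : Fin k → Fin n → ℤ) (a : Fin k → ℤ) (E : Finset ℤ)
    (hE0 : (0 : ℤ) ∈ E) (hEcard : E.card ≤ n + 1)
    (hrange : ∀ u : Fin n → ℕ, (∀ j, u j ≤ 1) →
      ∀ i, (∑ j, M i j * u j) ∈ Finset.Ico (a i) (a i + L)) :
    ({w : Fin k → ℤ | ∃ u : Fin n → ℕ, ∃ e : Fin k → ℤ,
        (∀ j, u j ≤ 1) ∧ wtZ e ≤ t ∧ (∀ i, e i ∈ E) ∧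
        w = fun i => (∑ j, M i j * u j) + e i}.ncard
      ≤ L ^ k * ∑ i ∈ Finset.range (t + 1), k.choose i * (n + 1) ^ i) ∧
    ((∀ u₁ u₂ : Fin n → ℕ, (∀ j, u₁ j ≤ 1) → (∀ j, u₂ j ≤ 1) →
        ∀ e₁ e₂ : Fin k → ℤ, wtZ e₁ ≤ t → wtZ e₂ ≤ t →
          (fun i => (∑ j, M i j * u₁ j) + e₁ i) =
            (fun i => (∑ j, M i j * u₂ j) + e₂ i) → u₁ = u₂) →
      2 ^ n ≤ L ^ k * ∑ i ∈ Finset.range (t + 1), k.choose i * (n + 1) ^ i) := by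
  set f : (Fin n → ℕ) → Fin k → ℤ := fun u i => ∑ j, M i j * u j
  set U : Set (Fin n → ℕ) := {u | ∀ j, u j ≤ 1}
  have hB : ∀ u ∈ U, f u ∈ Fintype.piFinset fun i => Ico (a i) (a i + L) := fun u hu =>
    Fintype.mem_piFinset.2 (hrange u hu)
  -- `wtZ = hammingNorm` and `fun i => x i + e i = x + e` by definition, so the set in the
  -- statement is `perturbedImage f U E t`.
  have hcount : (perturbedImage f U E t).ncard ≤
      L ^ k * ∑ i ∈ range (t + 1), k.choose i * (n + 1) ^ i := by
    calc _ ≤ _ := ncard_perturbedImage_le hB E t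
      _ ≤ _ := by
        simp only [Fintype.card_piFinset, Int.card_Ico, add_sub_cancel_left, Int.toNat_natCast,
          prod_const, card_univ, Fintype.card_fin]
        gcongr
  refine ⟨hcount, fun hinj => ?_⟩
  have hzero : hammingNorm (0 : Fin k → ℤ) ≤ t := by simp
  calc 2 ^ n = U.ncard := (ncard_binaryVectors n).symm
    _ ≤ (perturbedImage f U E t).ncard := by
      refine Set.ncard_le_ncard_of_injOn f (fun u hu => ⟨u, 0, hu, hzero, fun _ => hE0, by simp⟩)
        (fun u₁ hu₁ u₂ hu₂ h => hinj u₁ u₂ hu₁ hu₂ 0 0 hzero hzero ?_)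
        (finite_perturbedImage hB E t)
      simpa using h
    _ ≤ _ := hcount

theorem counting_converse_bound {n k t L : ℕ} (ht : 2 * t < k)
    (M : Fin k → Fin n → ℤ) (a : Fin k → ℤ) (E : Finset ℤ)
    (hE0 : (0 : ℤ) ∈ E) (hEcard : E.card ≤ n + 1)
    (hrange : ∀ u : Fin n → ℕ, (∀ j, u j ≤ 1) →
      ∀ i, (∑ j, M i j * u j) ∈ Finset.Ico (a i) (a i + L)) :
    ({w : Fin k → ℤ | ∃ u : Fin n → ℕ, ∃ e : Fin k → ℤ,
        (∀ j, u j ≤ 1) ∧ wtZ e ≤ t ∧ (∀ i, e i ∈ E) ∧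
        w = fun i => (∑ j, M i j * u j) + e i}.ncard
      ≤ L ^ k * ∑ i ∈ Finset.range (t + 1), k.choose i * (n + 1) ^ i) ∧
    ((∀ u₁ u₂ : Fin n → ℕ, (∀ j, u₁ j ≤ 1) → (∀ j, u₂ j ≤ 1) →
        ∀ e₁ e₂ : Fin k → ℤ, wtZ e₁ ≤ t → wtZ e₂ ≤ t →
          (fun i => (∑ j, M i j * u₁ j) + e₁ i) =
            (fun i => (∑ j, M i j * u₂ j) + e₂ i) → u₁ = u₂) →
      2 ^ n ≤ L ^ k * ∑ i ∈ Finset.range (t + 1), k.choose i * (n + 1) ^ i) :=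
  counting_converse_bound_general M a E hE0 hEcard hrange
end

section
/- Suppose M ∈ {0,...,q-1}^{p×s} is a signature code correcting t' errors (i.e., wt(Mz) > 2t' for every nonzero z ∈ {-1,0,1}^s arising from differences of binary vectors), and G ∈ {0,1}^{r×N} is a generator matrix of a binary linear code. If for each column block the decoding recovers all inner products M_{(i)}·v^{(j)} for all but at most t' indices i, then the full binary vector v ∈ {0,1}^{rs} can be uniquely recovered from B·v + e where B = Ḡᵀ ⊗ M (Kronecker product over the integers), provided wt(e) is small enough that at most t' of the p row-groups have more than the correctable number of errors. -/
/-
A received word determines, in every row group `i`, the observed sub-vector `Ḡᵀ w⁽ⁱ⁾ + e⁽ⁱ⁾`;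
so wherever both decodings succeed, `v` and `v'` have the same inner products
`M_{(i)}·v⁽ʲ⁾ = M_{(i)}·v'⁽ʲ⁾`. This fails for at most `t'` rows `i`, hence for each block `j`
the ternary difference `z = v'⁽ʲ⁾ - v⁽ʲ⁾` has `wt(M z) ≤ t' ≤ 2t'`, which the signature
property allows only for `z = 0`.
-/

lemma wtZ_le_card_of_eq_zero_of_notMem {k : ℕ} {x : Fin k → ℤ} {J : Finset (Fin k)}
    (hx : ∀ i ∉ J, x i = 0) : wtZ x ≤ J.card := by
  refine Finset.card_le_card fun i hi => ?_
  by_contra hiJ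
  exact (Finset.mem_filter.mp hi).2 (hx i hiJ)

lemma natCast_sub_natCast_mem_ternary {a b : ℕ} (ha : a ≤ 1) (hb : b ≤ 1) :
    (a : ℤ) - b = -1 ∨ (a : ℤ) - b = 0 ∨ (a : ℤ) - b = 1 := by
  omega

lemma eq_of_dot_eq_of_notMem {p s k : ℕ} {M : Fin p → Fin s → ℤ}
    (hsig : ∀ z : Fin s → ℤ, (∀ l, z l = -1 ∨ z l = 0 ∨ z l = 1) → z ≠ 0 →
      k < wtZ (fun i => ∑ l, M i l * z l))
    {u u' : Fin s → ℕ} (hu : ∀ l, u l ≤ 1) (hu' : ∀ l, u' l ≤ 1)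
    {J : Finset (Fin p)} (hJ : J.card ≤ k)
    (hdot : ∀ i ∉ J, ∑ l, M i l * u l = ∑ l, M i l * u' l) :
    u = u' := by
  by_contra hne
  set z : Fin s → ℤ := fun l => (u' l : ℤ) - u l
  have hz : z ≠ 0 := fun h0 =>
    hne (funext fun l => by exact_mod_cast (sub_eq_zero.mp (congrFun h0 l)).symm)
  have hMz : ∀ i ∉ J, ∑ l, M i l * z l = 0 := fun i hi => by
    simp only [z, mul_sub, Finset.sum_sub_distrib, hdot i hi, sub_self]
  have := hsig z (fun l => natCast_sub_natCast_mem_ternary (hu' l) (hu l)) hz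
  have := wtZ_le_card_of_eq_zero_of_notMem hMz
  omega

theorem kronecker_signature_recovery_general {p s r N t' : ℕ}
    (M : Fin p → Fin s → ℕ)
    (hsig : ∀ z : Fin s → ℤ, (∀ l, z l = -1 ∨ z l = 0 ∨ z l = 1) → z ≠ 0 →
      2 * t' < wtZ (fun i => ∑ l, (M i l : ℤ) * z l))
    (G : Fin r → Fin N → ℕ)
    (D : (Fin N → ℤ) → (Fin r → ℤ))
    (v v' : Fin r → Fin s → ℕ)
    (hv : ∀ j l, v j l ≤ 1) (hv' : ∀ j l, v' j l ≤ 1)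
    (e e' : Fin p → Fin N → ℤ)
    (J : Finset (Fin p)) (hJ : J.card ≤ t')
    (hdec : ∀ i ∉ J,
      D (fun a => (∑ j, (G j a : ℤ) * ∑ l, (M i l : ℤ) * v j l) + e i a) =
        fun j => ∑ l, (M i l : ℤ) * v j l)
    (hdec' : ∀ i ∉ J,
      D (fun a => (∑ j, (G j a : ℤ) * ∑ l, (M i l : ℤ) * v' j l) + e' i a) =
        fun j => ∑ l, (M i l : ℤ) * v' j l)
    (hobs : (fun (i : Fin p) (a : Fin N) =>
        (∑ j, (G j a : ℤ) * ∑ l, (M i l : ℤ) * v j l) + e i a) =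
      fun (i : Fin p) (a : Fin N) =>
        (∑ j, (G j a : ℤ) * ∑ l, (M i l : ℤ) * v' j l) + e' i a) :
    v = v' := by
  have hdot : ∀ i ∉ J,
      (fun j => ∑ l, (M i l : ℤ) * v j l) = fun j => ∑ l, (M i l : ℤ) * v' j l :=
    fun i hi => by rw [← hdec i hi, ← hdec' i hi, congrFun hobs i]
  funext j
  exact eq_of_dot_eq_of_notMem hsig (hv j) (hv' j) (hJ.trans (by omega))
    fun i hi => congrFun (hdot i hi) j

/-- Unique recovery for the Kronecker-product construction `B = Ḡᵀ ⊗ M`: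
if `M` is a signature code correcting `t'` errors, and a decoder `D` recovers,
for all but at most `t'` of the row indices `i` of `M`, the vector of inner
products `w⁽ⁱ⁾ = (M_{(i)}·v⁽¹⁾, …, M_{(i)}·v⁽ʳ⁾)` from the corresponding
sub-vector of `B·v + e` (and likewise for `v'` and `e'`), then `v = v'`,
i.e. the binary vector `v` is uniquely recoverable from `B·v + e`. -/
theorem kronecker_signature_recovery {p s r N t' q : ℕ}
    (M : Fin p → Fin s → ℕ) (hMq : ∀ i l, M i l < q)
    (hsig : ∀ z : Fin s → ℤ, (∀ l, z l = -1 ∨ z l = 0 ∨ z l = 1) → z ≠ 0 →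
      2 * t' < wtZ (fun i => ∑ l, (M i l : ℤ) * z l))
    (G : Fin r → Fin N → ℕ) (hG : ∀ j a, G j a ≤ 1)
    (D : (Fin N → ℤ) → (Fin r → ℤ))
    (v v' : Fin r → Fin s → ℕ)
    (hv : ∀ j l, v j l ≤ 1) (hv' : ∀ j l, v' j l ≤ 1)
    (e e' : Fin p → Fin N → ℤ)
    (J : Finset (Fin p)) (hJ : J.card ≤ t')
    (hdec : ∀ i ∉ J,
      D (fun a => (∑ j, (G j a : ℤ) * ∑ l, (M i l : ℤ) * v j l) + e i a) =
        fun j => ∑ l, (M i l : ℤ) * v j l)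
    (hdec' : ∀ i ∉ J,
      D (fun a => (∑ j, (G j a : ℤ) * ∑ l, (M i l : ℤ) * v' j l) + e' i a) =
        fun j => ∑ l, (M i l : ℤ) * v' j l)
    (hobs : (fun (i : Fin p) (a : Fin N) =>
        (∑ j, (G j a : ℤ) * ∑ l, (M i l : ℤ) * v j l) + e i a) =
      fun (i : Fin p) (a : Fin N) =>
        (∑ j, (G j a : ℤ) * ∑ l, (M i l : ℤ) * v' j l) + e' i a) :
    v = v' :=
  kronecker_signature_recovery_general M hsig G D v v' hv hv' e e' J hJ hdec hdec' hobs
end
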